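/- AUROC upper bound via total variation: let M and H be probability measures on a measurable space, let X ~ M and Y ~ H be independent, and let f be any measurable real-valued score function. Define AUROC(f) = P(f(X) > f(Y)) + (1/2)·P(f(X) = f(Y)). Then AUROC(f) ≤ 1/2 + TV(M, H) − TV(M, H)²/2. -/

import Mathlib

/-!
Split `M = M' + μ` and `H = H' + μ`, where the common part `μ = min(M, H)` is read off a Hahn
decomposition `s`: then `M'` and `H'` both have mass `d = M(s) - H(s) ≤ TV(M, H)` and `μ` has
mass `1 - d`. AUROC is additive in each measure, at most `P(X) Q(X)` for any pair `(P, Q)`, and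
exactly `μ(X)² / 2` on the diagonal pair `(μ, μ)` because swapping the samples exchanges wins and
losses. Hence `AUROC ≤ d² + 2d(1 - d) + (1 - d)² / 2 = 1/2 + d - d²/2`, which is increasing in `d`
on `[0, 1]`.
-/

open MeasureTheory

/-- Total variation distance between two measures: the supremum over measurable sets `A`
of `|P(A) − Q(A)|`. -/
noncomputable def tvDist {X : Type*} [MeasurableSpace X] (P Q : Measure X) : ℝ :=
  ⨆ A : {A : Set X // MeasurableSet A}, |(P A.1).toReal - (Q A.1).toReal|

/-- The AUROC of a score function `f` for distinguishing `M` from `H`: the probability that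
an independent sample from `M` receives a strictly higher score than a sample from `H`,
plus half the probability of a tie. -/
noncomputable def auroc {X : Type*} [MeasurableSpace X] (M H : Measure X) (f : X → ℝ) : ℝ :=
  ((M.prod H) {p | f p.1 > f p.2}).toReal
    + (1 / 2) * ((M.prod H) {p | f p.1 = f p.2}).toReal

open Set

namespace MeasureTheory

lemma measureReal_lt_add_measureReal_eq_add_measureReal_gt {α : Type*} [MeasurableSpace α]
    (ρ : Measure α) [IsFiniteMeasure ρ] {g h : α → ℝ} (hg : Measurable g) (hh : Measurable h) :
    ρ.real {a | g a < h a} + ρ.real {a | g a = h a} + ρ.real {a | h a < g a} = ρ.real univ := by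
  have hdisj : Disjoint {a | g a < h a} {a | g a = h a} :=
    disjoint_left.2 fun _ hlt heq => hlt.ne heq
  have hle : {a | g a < h a} ∪ {a | g a = h a} = {a | g a ≤ h a} := by
    ext a; simp [le_iff_lt_or_eq]
  have hgt : {a | h a < g a} = {a | g a ≤ h a}ᶜ := by
    ext a; simp
  rw [← measureReal_union hdisj (measurableSet_eq_fun hg hh), hle, hgt,
    measureReal_add_measureReal_compl (measurableSet_le hg hh)]

namespace IsHahnDecomposition

variable {X : Type*} [MeasurableSpace X] {μ ν : Measure X} {s : Set X}

theorem restrict_sub_add_restrict_add_restrict_compl [IsFiniteMeasure μ]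
    (hs : IsHahnDecomposition μ ν s) :
    ν.restrict s - μ.restrict s + (μ.restrict s + ν.restrict sᶜ) = ν := by
  rw [← add_assoc, Measure.sub_add_cancel_of_le hs.le_on,
    Measure.restrict_add_restrict_compl hs.measurableSet]

theorem measureReal_restrict_sub_univ [IsFiniteMeasure μ] [IsFiniteMeasure ν]
    (hs : IsHahnDecomposition μ ν s) :
    (ν.restrict s - μ.restrict s).real univ = ν.real s - μ.real s := by
  have hle : μ s ≤ ν s := by simpa using hs.le_on univ
  rw [measureReal_def, Measure.sub_apply .univ hs.le_on, Measure.restrict_apply_univ,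
    Measure.restrict_apply_univ, ENNReal.toReal_sub_of_le hle (measure_ne_top _ _),
    measureReal_def, measureReal_def]

end IsHahnDecomposition

end MeasureTheory

section TotalVariation

variable {X : Type*} [MeasurableSpace X] {P Q : Measure X}

lemma abs_measureReal_sub_le_tvDist [IsFiniteMeasure P] [IsFiniteMeasure Q] {A : Set X}
    (hA : MeasurableSet A) : |P.real A - Q.real A| ≤ tvDist P Q := by
  refine le_ciSup (f := fun A : {A : Set X // MeasurableSet A} => |P.real A.1 - Q.real A.1|)
    ⟨P.real univ + Q.real univ, ?_⟩ ⟨A, hA⟩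
  rintro _ ⟨B, rfl⟩
  exact abs_sub_le_of_nonneg_of_le measureReal_nonneg
    (le_add_of_le_of_nonneg (measureReal_mono (subset_univ _)) measureReal_nonneg)
    measureReal_nonneg
    (le_add_of_nonneg_of_le measureReal_nonneg (measureReal_mono (subset_univ _)))

lemma tvDist_le_one [IsProbabilityMeasure P] [IsProbabilityMeasure Q] : tvDist P Q ≤ 1 := by
  have : Nonempty {A : Set X // MeasurableSet A} := ⟨⟨∅, .empty⟩⟩
  exact ciSup_le fun A => abs_sub_le_of_nonneg_of_le measureReal_nonneg measureReal_le_one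
    measureReal_nonneg measureReal_le_one

end TotalVariation

section Auroc

variable {X : Type*} [MeasurableSpace X] {f : X → ℝ}

lemma auroc_nonneg (P Q : Measure X) : 0 ≤ auroc P Q f := by
  unfold auroc; positivity

lemma auroc_add_left (P₁ P₂ Q : Measure X) [IsFiniteMeasure P₁] [IsFiniteMeasure P₂]
    [IsFiniteMeasure Q] : auroc (P₁ + P₂) Q f = auroc P₁ Q f + auroc P₂ Q f := by
  simp only [auroc, Measure.add_prod, Measure.add_apply,
    ENNReal.toReal_add (measure_ne_top _ _) (measure_ne_top _ _)]
  ring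

lemma auroc_add_right (P Q₁ Q₂ : Measure X) [IsFiniteMeasure P] [IsFiniteMeasure Q₁]
    [IsFiniteMeasure Q₂] : auroc P (Q₁ + Q₂) f = auroc P Q₁ f + auroc P Q₂ f := by
  simp only [auroc, Measure.prod_add, Measure.add_apply,
    ENNReal.toReal_add (measure_ne_top _ _) (measure_ne_top _ _)]
  ring

lemma auroc_add_auroc_swap (hf : Measurable f) (P Q : Measure X) [IsFiniteMeasure P]
    [IsFiniteMeasure Q] : auroc P Q f + auroc Q P f = P.real univ * Q.real univ := by
  have hswap : ∀ s, MeasurableSet s → (Q.prod P).real s = (P.prod Q).real (Prod.swap ⁻¹' s) :=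
    fun s hs => by
      rw [← Measure.prod_swap, measureReal_def, measureReal_def,
        Measure.map_apply measurable_swap hs]
  have hgt : (Q.prod P).real {p | f p.1 > f p.2} = (P.prod Q).real {p | f p.1 < f p.2} :=
    hswap _ (measurableSet_lt (hf.comp measurable_snd) (hf.comp measurable_fst))
  have heq : (Q.prod P).real {p | f p.1 = f p.2} = (P.prod Q).real {p | f p.1 = f p.2} := by
    have hmeas : MeasurableSet {p : X × X | f p.1 = f p.2} :=
      measurableSet_eq_fun (hf.comp measurable_fst) (hf.comp measurable_snd)
    rw [hswap _ hmeas]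
    congr 1
    ext p
    exact eq_comm
  have hpart := measureReal_lt_add_measureReal_eq_add_measureReal_gt (P.prod Q)
    (hf.comp measurable_fst) (hf.comp measurable_snd)
  rw [← univ_prod_univ, measureReal_prod_prod] at hpart
  simp only [auroc, ← measureReal_def]
  rw [hgt, heq, ← hpart]
  simp only [Function.comp_apply, gt_iff_lt]
  ring

lemma auroc_self (hf : Measurable f) (μ : Measure X) [IsFiniteMeasure μ] :
    auroc μ μ f = μ.real univ ^ 2 / 2 := by
  linarith [auroc_add_auroc_swap hf μ μ]

lemma auroc_le_measureReal_univ_mul (hf : Measurable f) (P Q : Measure X) [IsFiniteMeasure P]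
    [IsFiniteMeasure Q] : auroc P Q f ≤ P.real univ * Q.real univ := by
  linarith [auroc_add_auroc_swap hf P Q, auroc_nonneg (f := f) Q P]

lemma auroc_add_add_le (hf : Measurable f) (P Q μ : Measure X) [IsFiniteMeasure P]
    [IsFiniteMeasure Q] [IsFiniteMeasure μ] :
    auroc (P + μ) (Q + μ) f ≤
      P.real univ * Q.real univ + (P.real univ + Q.real univ) * μ.real univ
        + μ.real univ ^ 2 / 2 := by
  rw [auroc_add_left, auroc_add_right, auroc_add_right, auroc_self hf]
  linarith [auroc_le_measureReal_univ_mul hf P Q, auroc_le_measureReal_univ_mul hf P μ,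
    auroc_le_measureReal_univ_mul hf μ Q]

end Auroc

/-- **AUROC upper bound via total variation.** Let `M` and `H` be probability measures,
let `X ~ M` and `Y ~ H` be independent, and let `f` be any measurable real-valued score
function.  Then `AUROC(f) ≤ 1/2 + TV(M, H) − TV(M, H)²/2`. -/
theorem auroc_le_half_add_tv_sub_tv_sq {X : Type*} [MeasurableSpace X]
    (M H : Measure X) [IsProbabilityMeasure M] [IsProbabilityMeasure H]
    (f : X → ℝ) (hf : Measurable f) :
    auroc M H f ≤ 1 / 2 + tvDist M H - tvDist M H ^ 2 / 2 := by
  obtain ⟨s, hs⟩ := exists_isHahnDecomposition H M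
  set μ := H.restrict s + M.restrict sᶜ
  set d := M.real s - H.real s
  have hM : M.restrict s - H.restrict s + μ = M :=
    hs.restrict_sub_add_restrict_add_restrict_compl
  have hH : H.restrict sᶜ - M.restrict sᶜ + μ = H := by
    simpa only [compl_compl, add_comm (M.restrict sᶜ)]
      using hs.compl.restrict_sub_add_restrict_add_restrict_compl
  have hdH : H.real sᶜ - M.real sᶜ = d := by
    rw [probReal_compl_eq_one_sub hs.measurableSet, probReal_compl_eq_one_sub hs.measurableSet]
    ring
  have hμ : μ.real univ = 1 - d := by
    have hmass :=
      measureReal_add_apply (μ₁ := M.restrict s - H.restrict s) (μ₂ := μ) (s := univ)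
    rw [hM, probReal_univ, hs.measureReal_restrict_sub_univ] at hmass
    linarith
  have hd : d ≤ tvDist M H :=
    (le_abs_self d).trans (abs_measureReal_sub_le_tvDist hs.measurableSet)
  have hbound :=
    auroc_add_add_le hf (M.restrict s - H.restrict s) (H.restrict sᶜ - M.restrict sᶜ) μ
  rw [hM, hH, hs.measureReal_restrict_sub_univ, hs.compl.measureReal_restrict_sub_univ, hdH,
    hμ] at hbound
  have htv : tvDist M H ≤ 1 := tvDist_le_one
  calc auroc M H f ≤ 1 / 2 + d - d ^ 2 / 2 := hbound.trans_eq (by ring)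
    _ ≤ 1 / 2 + tvDist M H - tvDist M H ^ 2 / 2 := by
      nlinarith [mul_nonneg (sub_nonneg.2 hd) (by linarith : (0 : ℝ) ≤ 2 - tvDist M H - d)]
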